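/- Let s : ZMod d → ℂ be the unit vector s r = ((if r = 0 then 1 else 0) + 1/√d) / √(2 + 2/√d), and let ρ_s be the rank-one projection (ρ_s) r s' = s r · conj(s s'). Then ρ_s is a density matrix with G_X(ρ_s) = G_P(ρ_s) = ((d − 1)/(d + 1)) · (2 + √d)/(2 + 2√d), and hence G_XP(ρ_s) = ((d − 1)/(d + 1)) · (1 + 1/(1 + √d)). In particular, the supremum of G_XP over all density matrices is at least ((d − 1)/(d + 1)) · (1 + 1/(1 + √d)). -/

import Mathlib

open Matrix
open scoped ComplexOrder

noncomputable section

/-- The Lorenz values of `p : Fin d → ℝ`, computed with the sorting permutation `Tuple.sort p`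
(they are independent of the choice of sorting permutation):
`L(p, ℓ) = ∑_{k=0}^{ℓ} p (π k)` where `π` arranges the values of `p` in ascending order. -/
def lorenzF {d : ℕ} (p : Fin d → ℝ) (ℓ : Fin d) : ℝ :=
  ∑ k ∈ Finset.Iic ℓ, p (Tuple.sort p k)

/-- The Gini index of `p : Fin d → ℝ`: `G(p) = 1 − (2/(d+1)) · ∑_{ℓ=0}^{d−1} L(p, ℓ)`. -/
def giniF {d : ℕ} (p : Fin d → ℝ) : ℝ :=
  1 - (2 / ((d : ℝ) + 1)) * ∑ ℓ : Fin d, lorenzF p ℓ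

/-- The Gini index of a function `p : ZMod d → ℝ`, obtained by reindexing along the
bijection `Fin d → ZMod d`, `k ↦ (k : ZMod d)`. -/
def gini {d : ℕ} [NeZero d] (p : ZMod d → ℝ) : ℝ :=
  giniF (fun k : Fin d => p ((k : ℕ) : ZMod d))

/-- A density matrix: positive semidefinite with trace 1. -/
def IsDensityMatrix {d : ℕ} [NeZero d] (ρ : Matrix (ZMod d) (ZMod d) ℂ) : Prop :=
  ρ.PosSemidef ∧ ρ.trace = 1

/-- The position distribution of `ρ`: `P_X(ρ) r = Re(ρ r r)`. -/
def PX {d : ℕ} [NeZero d] (ρ : Matrix (ZMod d) (ZMod d) ℂ) : ZMod d → ℝ :=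
  fun r => (ρ r r).re

/-- `ω = exp(2πi/d)`. -/
def omega (d : ℕ) : ℂ := Complex.exp (2 * Real.pi * Complex.I / d)

/-- The Fourier matrix `F r s = ω^{(r·s).val} / √d`. -/
def Fmat (d : ℕ) [NeZero d] : Matrix (ZMod d) (ZMod d) ℂ :=
  Matrix.of fun r s : ZMod d => omega d ^ (r * s).val / (Real.sqrt d : ℂ)

/-- The momentum distribution of `ρ`: `P_P(ρ) r = Re((Fᴴ ρ F) r r)`. -/
def PP {d : ℕ} [NeZero d] (ρ : Matrix (ZMod d) (ZMod d) ℂ) : ZMod d → ℝ :=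
  fun r => (((Fmat d)ᴴ * ρ * Fmat d) r r).re

/-- `G_X(ρ) = G(P_X(ρ))`. -/
def GX {d : ℕ} [NeZero d] (ρ : Matrix (ZMod d) (ZMod d) ℂ) : ℝ := gini (PX ρ)

/-- `G_P(ρ) = G(P_P(ρ))`. -/
def GP {d : ℕ} [NeZero d] (ρ : Matrix (ZMod d) (ZMod d) ℂ) : ℝ := gini (PP ρ)

/-- `G_XP(ρ) = G_X(ρ) + G_P(ρ)`. -/
def GXP {d : ℕ} [NeZero d] (ρ : Matrix (ZMod d) (ZMod d) ℂ) : ℝ := GX ρ + GP ρ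

end

/-!
The vector `s ∝ e₀ + d^{-1/2} 𝟙` is a fixed point of the Fourier transform, because `Fᴴ e₀ = d^{-1/2} 𝟙`
and `Fᴴ 𝟙 = √d e₀` (a full sum of `d`-th roots of unity vanishes). Hence the position and momentum
distributions of `ρ_s = s sᴴ` coincide. Both have one entry `a` and `d - 1` entries `b ≤ a`; a single
transposition sorts such a vector, so its Lorenz curve is explicit and its Gini index is
`1 - d b - 2 (a - b) / (d + 1)`. The supremum bound holds because every `G_XP` is at most `2`.
-/

open ComplexConjugate

lemma omega_pow_val {d : ℕ} [NeZero d] (x : ZMod d) :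
    omega d ^ x.val = ZMod.stdAddChar x := by
  rw [ZMod.stdAddChar_apply, ZMod.toCircle_apply, omega, ← Complex.exp_nat_mul]
  ring_nf

lemma sum_conj_omega_pow_val_mul {d : ℕ} [NeZero d] (r : ZMod d) :
    ∑ t : ZMod d, conj (omega d ^ (t * r).val) = if r = 0 then (d : ℂ) else 0 := by
  simp_rw [omega_pow_val, ← map_sum, AddChar.sum_mulShift r (ZMod.isPrimitive_stdAddChar d),
    ZMod.card]
  split_ifs <;> simp

lemma Fmat_conjTranspose_mulVec_single_zero (d : ℕ) [NeZero d] :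
    (Fmat d)ᴴ *ᵥ Pi.single 0 1 = fun _ => ((Real.sqrt d : ℝ) : ℂ)⁻¹ := by
  ext r
  simp [Fmat, mulVec_single, div_eq_mul_inv]

lemma Fmat_conjTranspose_mulVec_one (d : ℕ) [NeZero d] :
    (Fmat d)ᴴ *ᵥ 1 = Pi.single 0 ((Real.sqrt d : ℝ) : ℂ) := by
  ext r
  have hd : ((Real.sqrt d : ℝ) : ℂ) ^ 2 = d := by
    rw [← Complex.ofReal_pow, Real.sq_sqrt (Nat.cast_nonneg d), Complex.ofReal_natCast]
  have hd0 : ((Real.sqrt d : ℝ) : ℂ) ≠ 0 := by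
    simp [NeZero.ne d]
  simp only [mulVec, dotProduct, conjTranspose_apply, Fmat, of_apply, Pi.one_apply, mul_one,
    star_div₀, Complex.star_def, Complex.conj_ofReal, ← Finset.sum_div, sum_conj_omega_pow_val_mul,
    Pi.single_apply]
  split_ifs
  · field_simp; rw [hd]
  · simp

lemma Fmat_conjTranspose_mulVec_fixed (d : ℕ) [NeZero d] :
    (Fmat d)ᴴ *ᵥ (Pi.single 0 1 + ((Real.sqrt d : ℝ) : ℂ)⁻¹ • 1)
      = Pi.single 0 1 + ((Real.sqrt d : ℝ) : ℂ)⁻¹ • 1 := by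
  have hd0 : ((Real.sqrt d : ℝ) : ℂ) ≠ 0 := by simp [NeZero.ne d]
  rw [mulVec_add, mulVec_smul, Fmat_conjTranspose_mulVec_single_zero,
    Fmat_conjTranspose_mulVec_one]
  ext r
  rcases eq_or_ne r 0 with rfl | hr
  · simp [hd0, add_comm]
  · simp [hr]

lemma PX_vecMulVec_star {d : ℕ} [NeZero d] (v : ZMod d → ℂ) :
    PX (vecMulVec v (star v)) = fun r => ‖v r‖ ^ 2 := by
  ext r
  simp [PX, vecMulVec_apply, Complex.mul_conj, Complex.normSq_eq_norm_sq, -Complex.ofReal_pow]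

lemma PP_vecMulVec_star {d : ℕ} [NeZero d] (v : ZMod d → ℂ) :
    PP (vecMulVec v (star v)) = PX (vecMulVec ((Fmat d)ᴴ *ᵥ v) (star ((Fmat d)ᴴ *ᵥ v))) := by
  ext r
  simp only [PP, PX, mul_vecMulVec, vecMulVec_mul, star_mulVec, conjTranspose_conjTranspose]

lemma isDensityMatrix_vecMulVec_star {d : ℕ} [NeZero d] {v : ZMod d → ℂ}
    (hv : ∑ r, ‖v r‖ ^ 2 = 1) : IsDensityMatrix (vecMulVec v (star v)) := by
  refine ⟨posSemidef_vecMulVec_self_star v, ?_⟩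
  rw [trace_vecMulVec]
  simpa [dotProduct, Complex.mul_conj, Complex.normSq_eq_norm_sq] using congrArg Complex.ofReal hv

lemma lorenzF_eq_of_monotone {d : ℕ} {p : Fin d → ℝ} {σ : Equiv.Perm (Fin d)}
    (hσ : Monotone (p ∘ σ)) (ℓ : Fin d) : lorenzF p ℓ = ∑ k ∈ Finset.Iic ℓ, p (σ k) := by
  have hsort := (Tuple.comp_sort_eq_comp_iff_monotone.2 hσ).symm
  exact Finset.sum_congr rfl fun k _ => congrFun hsort k

lemma monotone_update_last {α : Type*} [Preorder α] {n : ℕ} {a b : α} (hba : b ≤ a) :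
    Monotone (Function.update (fun _ : Fin (n + 1) => b) (Fin.last n) a) := by
  intro k l hkl
  rcases eq_or_ne l (Fin.last n) with rfl | hl
  · rcases eq_or_ne k (Fin.last n) with rfl | hk <;> simp [*]
  · have hk : k ≠ Fin.last n := fun h => hl (Fin.last_le_iff.1 (h ▸ hkl))
    simp [hk, hl]

lemma sum_Iic_update_last {n : ℕ} (a b : ℝ) (ℓ : Fin (n + 1)) :
    ∑ k ∈ Finset.Iic ℓ, Function.update (fun _ => b) (Fin.last n) a k
      = ((ℓ : ℕ) + 1) * b + if ℓ = Fin.last n then a - b else 0 := by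
  have hsplit : ∀ k : Fin (n + 1), Function.update (fun _ => b) (Fin.last n) a k
      = b + if k = Fin.last n then a - b else 0 := by
    intro k; rcases eq_or_ne k (Fin.last n) with rfl | hk <;> simp [*]
  simp only [hsplit, Finset.sum_add_distrib, Finset.sum_const, Fin.card_Iic, nsmul_eq_mul,
    Finset.sum_ite_eq', Finset.mem_Iic, Fin.last_le_iff]
  push_cast; ring

lemma sum_fin_val_add_one (m : ℕ) : ∑ k : Fin m, ((k : ℕ) + 1 : ℝ) = m * (m + 1) / 2 := by
  rw [Fin.sum_univ_eq_sum_range (fun k => (k : ℝ) + 1)]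
  induction m with
  | zero => simp
  | succ m ih => rw [Finset.sum_range_succ, ih]; push_cast; ring

lemma giniF_update_const {n : ℕ} (i : Fin (n + 1)) {a b : ℝ} (hba : b ≤ a) :
    giniF (Function.update (fun _ => b) i a)
      = 1 - ((n + 1 : ℕ) : ℝ) * b - 2 * (a - b) / (((n + 1 : ℕ) : ℝ) + 1) := by
  set σ := Equiv.swap i (Fin.last n)
  have hcomp : Function.update (fun _ => b) i a ∘ σ
      = Function.update (fun _ => b) (Fin.last n) a := by
    rw [Function.update_comp_equiv, Equiv.symm_swap, Equiv.swap_apply_left]; rfl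
  have hσ : Monotone (Function.update (fun _ => b) i a ∘ σ) :=
    hcomp ▸ monotone_update_last hba
  have hsum : ∑ ℓ, lorenzF (Function.update (fun _ => b) i a) ℓ
      = ((n + 1 : ℕ) : ℝ) * (((n + 1 : ℕ) : ℝ) + 1) / 2 * b + (a - b) := by
    simp only [lorenzF_eq_of_monotone hσ, ← Function.comp_apply (g := σ), hcomp,
      sum_Iic_update_last]
    rw [Finset.sum_add_distrib, ← Finset.sum_mul, sum_fin_val_add_one, Finset.sum_ite_eq']
    simp
  rw [giniF, hsum]
  field_simp
  ring

lemma gini_update_const {d : ℕ} [NeZero d] (i : ZMod d) {a b : ℝ} (hba : b ≤ a) :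
    gini (Function.update (fun _ => b) i a) = 1 - d * b - 2 * (a - b) / (d + 1) := by
  obtain ⟨n, rfl⟩ := Nat.exists_eq_add_one_of_ne_zero (NeZero.ne d)
  rw [gini, ← giniF_update_const i hba]
  congr with k
  exact congrArg _ (Fin.cast_val_eq_self k)

lemma giniF_le_one {d : ℕ} {p : Fin d → ℝ} (hp : ∀ k, 0 ≤ p k) : giniF p ≤ 1 := by
  have hL : 0 ≤ ∑ ℓ, lorenzF p ℓ := Finset.sum_nonneg fun _ _ => Finset.sum_nonneg fun _ _ => hp _
  have hcoef : 0 ≤ 2 / ((d : ℝ) + 1) := by positivity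
  unfold giniF
  nlinarith

lemma GXP_le_two {d : ℕ} [NeZero d] {ρ : Matrix (ZMod d) (ZMod d) ℂ} (hρ : ρ.PosSemidef) :
    GXP ρ ≤ 2 := by
  have hX : GX ρ ≤ 1 := giniF_le_one fun k => hρ.diag_nonneg.1
  have hP : GP ρ ≤ 1 :=
    giniF_le_one fun k => (hρ.conjTranspose_mul_mul_same (Fmat d)).diag_nonneg.1
  rw [GXP]; linarith

lemma sum_update_const {ι R : Type*} [Fintype ι] [DecidableEq ι] [Ring R] (i : ι) (a b : R) :
    ∑ r, Function.update (fun _ => b) i a r = a + (Fintype.card ι - 1) * b := by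
  have : Nonempty ι := ⟨i⟩
  rw [Finset.sum_update_of_mem (Finset.mem_univ i)]
  simp [Finset.card_sdiff, Nat.cast_sub Fintype.card_pos]

noncomputable def fourierFixedState (d : ℕ) : ZMod d → ℂ :=
  fun r => ((((if r = 0 then 1 else 0) + 1 / √(d : ℝ)) / √(2 + 2 / √(d : ℝ)) : ℝ) : ℂ)

lemma fourierFixedState_eq_smul (d : ℕ) :
    fourierFixedState d = ((√(2 + 2 / √(d : ℝ)) : ℝ) : ℂ)⁻¹ •
      (Pi.single 0 1 + ((√(d : ℝ) : ℝ) : ℂ)⁻¹ • 1) := by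
  ext r
  rcases eq_or_ne r 0 with rfl | hr <;> simp [fourierFixedState, *, div_eq_mul_inv, mul_comm]

lemma Fmat_conjTranspose_mulVec_fourierFixedState (d : ℕ) [NeZero d] :
    (Fmat d)ᴴ *ᵥ fourierFixedState d = fourierFixedState d := by
  rw [fourierFixedState_eq_smul, mulVec_smul, Fmat_conjTranspose_mulVec_fixed]

lemma PX_fourierFixedState (d : ℕ) [NeZero d] :
    PX (vecMulVec (fourierFixedState d) (star (fourierFixedState d)))
      = Function.update (fun _ => 1 / (2 * (d + √(d : ℝ)))) 0 ((1 + √(d : ℝ)) / (2 * √(d : ℝ))) := by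
  have hc : 0 < √(d : ℝ) := Real.sqrt_pos.2 (mod_cast NeZero.pos d)
  have hc2 : √(d : ℝ) ^ 2 = d := Real.sq_sqrt (Nat.cast_nonneg d)
  have hM2 : √(2 + 2 / √(d : ℝ)) ^ 2 = 2 + 2 / √(d : ℝ) := Real.sq_sqrt (by positivity)
  rw [PX_vecMulVec_star]
  ext r
  rw [fourierFixedState, Complex.norm_real, Real.norm_eq_abs, sq_abs, div_pow, hM2]
  set c := √(d : ℝ)
  rw [← hc2]
  rcases eq_or_ne r 0 with rfl | hr
  · simp only [if_true, Function.update_self]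
    field_simp
    ring
  · simp only [hr, if_false, ne_eq, not_false_eq_true, Function.update_of_ne]
    field_simp
    ring

lemma isDensityMatrix_fourierFixedState (d : ℕ) [NeZero d] :
    IsDensityMatrix (vecMulVec (fourierFixedState d) (star (fourierFixedState d))) := by
  have hc : 0 < √(d : ℝ) := Real.sqrt_pos.2 (mod_cast NeZero.pos d)
  have hc2 : √(d : ℝ) ^ 2 = d := Real.sq_sqrt (Nat.cast_nonneg d)
  apply isDensityMatrix_vecMulVec_star
  rw [← PX_vecMulVec_star, PX_fourierFixedState, sum_update_const, ZMod.card]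
  set c := √(d : ℝ)
  rw [← hc2]
  field_simp
  ring

lemma GX_fourierFixedState (d : ℕ) [NeZero d] :
    GX (vecMulVec (fourierFixedState d) (star (fourierFixedState d)))
      = ((d : ℝ) - 1) / ((d : ℝ) + 1) * ((2 + √(d : ℝ)) / (2 + 2 * √(d : ℝ))) := by
  have hc : 0 < √(d : ℝ) := Real.sqrt_pos.2 (mod_cast NeZero.pos d)
  have hc2 : √(d : ℝ) ^ 2 = d := Real.sq_sqrt (Nat.cast_nonneg d)
  have hba : 1 / (2 * (d + √(d : ℝ))) ≤ (1 + √(d : ℝ)) / (2 * √(d : ℝ)) := by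
    rw [div_le_div_iff₀ (by positivity) (by positivity)]
    nlinarith
  rw [GX, PX_fourierFixedState, gini_update_const 0 hba]
  set c := √(d : ℝ)
  rw [← hc2]
  field_simp
  ring

lemma GP_fourierFixedState (d : ℕ) [NeZero d] :
    GP (vecMulVec (fourierFixedState d) (star (fourierFixedState d)))
      = GX (vecMulVec (fourierFixedState d) (star (fourierFixedState d))) := by
  rw [GP, GX, PP_vecMulVec_star, Fmat_conjTranspose_mulVec_fourierFixedState]

theorem GXP_example_state_general {d : ℕ} [NeZero d]
    (s : ZMod d → ℂ)
    (hs : ∀ r : ZMod d,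
      s r = ((((if r = 0 then 1 else 0) + 1 / Real.sqrt d) / Real.sqrt (2 + 2 / Real.sqrt d) : ℝ) : ℂ))
    (ρs : Matrix (ZMod d) (ZMod d) ℂ)
    (hρs : ∀ r s' : ZMod d, ρs r s' = s r * (starRingEnd ℂ) (s s')) :
    IsDensityMatrix ρs ∧
    GX ρs = (((d : ℝ) - 1) / ((d : ℝ) + 1)) * ((2 + Real.sqrt d) / (2 + 2 * Real.sqrt d)) ∧
    GP ρs = (((d : ℝ) - 1) / ((d : ℝ) + 1)) * ((2 + Real.sqrt d) / (2 + 2 * Real.sqrt d)) ∧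
    GXP ρs = (((d : ℝ) - 1) / ((d : ℝ) + 1)) * (1 + 1 / (1 + Real.sqrt d)) ∧
    (((d : ℝ) - 1) / ((d : ℝ) + 1)) * (1 + 1 / (1 + Real.sqrt d)) ≤
      sSup {x : ℝ | ∃ σ : Matrix (ZMod d) (ZMod d) ℂ, IsDensityMatrix σ ∧ GXP σ = x} := by
  obtain rfl : s = fourierFixedState d := funext hs
  obtain rfl : ρs = vecMulVec (fourierFixedState d) (star (fourierFixedState d)) := by
    ext r r'
    rw [hρs, vecMulVec_apply, Pi.star_apply, Complex.star_def]
  have hGXP : GXP (vecMulVec (fourierFixedState d) (star (fourierFixedState d)))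
      = ((d : ℝ) - 1) / ((d : ℝ) + 1) * (1 + 1 / (1 + √(d : ℝ))) := by
    have hc : 0 < √(d : ℝ) := Real.sqrt_pos.2 (mod_cast NeZero.pos d)
    rw [GXP, GP_fourierFixedState, GX_fourierFixedState]
    field_simp
    ring
  have hdens := isDensityMatrix_fourierFixedState d
  refine ⟨hdens, GX_fourierFixedState d, (GP_fourierFixedState d).trans (GX_fourierFixedState d),
    hGXP, hGXP ▸ le_csSup ⟨2, ?_⟩ ⟨_, hdens, rfl⟩⟩
  rintro _ ⟨σ, hσ, rfl⟩
  exact GXP_le_two hσ.1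

/-- Let `s : ZMod d → ℂ` be the unit vector
`s r = ((if r = 0 then 1 else 0) + 1/√d) / √(2 + 2/√d)`, and let `ρ_s` be the rank-one
projection `(ρ_s) r s' = s r · conj(s s')`. Then `ρ_s` is a density matrix with
`G_X(ρ_s) = G_P(ρ_s) = ((d − 1)/(d + 1)) · (2 + √d)/(2 + 2√d)`, and hence
`G_XP(ρ_s) = ((d − 1)/(d + 1)) · (1 + 1/(1 + √d))`. In particular, the supremum of `G_XP`
over all density matrices is at least `((d − 1)/(d + 1)) · (1 + 1/(1 + √d))`. -/
theorem GXP_example_state {d : ℕ} [NeZero d] (hd : 2 ≤ d)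
    (s : ZMod d → ℂ)
    (hs : ∀ r : ZMod d,
      s r = ((((if r = 0 then 1 else 0) + 1 / Real.sqrt d) / Real.sqrt (2 + 2 / Real.sqrt d) : ℝ) : ℂ))
    (ρs : Matrix (ZMod d) (ZMod d) ℂ)
    (hρs : ∀ r s' : ZMod d, ρs r s' = s r * (starRingEnd ℂ) (s s')) :
    IsDensityMatrix ρs ∧
    GX ρs = (((d : ℝ) - 1) / ((d : ℝ) + 1)) * ((2 + Real.sqrt d) / (2 + 2 * Real.sqrt d)) ∧
    GP ρs = (((d : ℝ) - 1) / ((d : ℝ) + 1)) * ((2 + Real.sqrt d) / (2 + 2 * Real.sqrt d)) ∧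
    GXP ρs = (((d : ℝ) - 1) / ((d : ℝ) + 1)) * (1 + 1 / (1 + Real.sqrt d)) ∧
    (((d : ℝ) - 1) / ((d : ℝ) + 1)) * (1 + 1 / (1 + Real.sqrt d)) ≤
      sSup {x : ℝ | ∃ σ : Matrix (ZMod d) (ZMod d) ℂ, IsDensityMatrix σ ∧ GXP σ = x} :=
  GXP_example_state_general s hs ρs hρs
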